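/- arXiv:2102.08244 — 2 statements merged into one kernel-verified Lean document; each statement's English description precedes it below -/
import Mathlib

section
/- Fix ε > 0. Let X and X' be datasets of size n in [a,b] that are swap-neighbors (they differ in at most one element). Then for every Lebesgue-measurable set S ⊆ O↗, (∫_S exp((ε/4)·u_Q(X,o)) do) · (∫_{O↗} exp((ε/4)·u_Q(X',o)) do) ≤ e^ε · (∫_S exp((ε/4)·u_Q(X',o)) do) · (∫_{O↗} exp((ε/4)·u_Q(X,o)) do), where the integrals are with respect to m-dimensional Lebesgue measure. Equivalently, the mechanism M_Q with output density over O↗ proportional to exp((ε/(2·Δ))·u_Q(X,o)) with Δ = 2 satisfies ε-differential privacy. -/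
open scoped Classical
open Finset MeasureTheory

noncomputable def cnt (X : Multiset ℝ) (u v : ℝ) : ℕ :=
  Multiset.card (X.filter (fun x => u ≤ x ∧ x < v))

noncomputable def oext (a b : ℝ) (m : ℕ) (o : Fin m → ℝ) (j : ℕ) : ℝ :=
  if h : 1 ≤ j ∧ j ≤ m then o ⟨j - 1, by omega⟩ else if j = 0 then a else b + 1

noncomputable def uQ (a b : ℝ) (m N : ℕ) (q : ℕ → ℝ) (X : Multiset ℝ) (o : Fin m → ℝ) : ℝ :=
  -∑ j ∈ Finset.range (m + 1),
    |(cnt X (oext a b m o j) (oext a b m o (j + 1)) : ℝ) - (q (j + 1) - q j) * N|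

def Oup (a b : ℝ) (m : ℕ) : Set (Fin m → ℝ) :=
  {o | Monotone o ∧ ∀ i, a ≤ o i ∧ o i ≤ b}

lemma cnt_cons (y : ℝ) (Y : Multiset ℝ) (u v : ℝ) :
    cnt (y ::ₘ Y) u v = cnt Y u v + (if u ≤ y ∧ y < v then 1 else 0) := by
  simp only [cnt, Multiset.filter_cons]
  split_ifs <;> simp [add_comm]

-- the indicator intervals are pairwise disjoint for o ∈ Oup
lemma ind_sum_le_one (a b : ℝ) (hab : a < b) (m : ℕ) (o : Fin m → ℝ)
    (ho : o ∈ Oup a b m) (y : ℝ) :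
    ∑ j ∈ Finset.range (m + 1),
      (if oext a b m o j ≤ y ∧ y < oext a b m o (j + 1) then (1 : ℝ) else 0) ≤ 1 := by
  classical
  have hmono : ∀ j k : ℕ, 1 ≤ j → j ≤ k → k ≤ m + 1 → oext a b m o j ≤ oext a b m o k := by
    intro j k h1 hjk hk
    unfold oext
    rcases ho with ⟨hom, hbd⟩
    by_cases hj : 1 ≤ j ∧ j ≤ m
    · by_cases hk' : 1 ≤ k ∧ k ≤ m
      · simp only [dif_pos hj, dif_pos hk']
        exact hom (by simp [Fin.le_def]; omega)
      · have hk0 : k = m + 1 := by omega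
        simp only [dif_pos hj, dif_neg hk', if_neg (by omega : ¬ k = 0)]
        have := (hbd ⟨j - 1, by omega⟩).2
        linarith
    · have hj0 : j = m + 1 := by omega
      have hk0 : k = m + 1 := by omega
      subst hj0; subst hk0
      exact le_refl _
  rw [Finset.sum_boole]
  norm_cast
  apply Finset.card_le_one.mpr
  intro j hj k hk
  simp only [Finset.mem_filter, Finset.mem_range] at hj hk
  by_contra hne
  rcases Nat.lt_or_ge j k with h | h
  · have : oext a b m o (j + 1) ≤ oext a b m o k :=
      hmono (j + 1) k (by omega) (by omega) (by omega)
    linarith [hj.2.1, hj.2.2, hk.2.1, hk.2.2]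
  · have h' : k < j := by omega
    have : oext a b m o (k + 1) ≤ oext a b m o j :=
      hmono (k + 1) j (by omega) (by omega) (by omega)
    linarith [hj.2.1, hj.2.2, hk.2.1, hk.2.2]

lemma uQ_diff_le (a b : ℝ) (hab : a < b) (m N : ℕ) (q : ℕ → ℝ)
    (Y : Multiset ℝ) (y y' : ℝ) (o : Fin m → ℝ) (ho : o ∈ Oup a b m) :
    uQ a b m N q (y ::ₘ Y) o - uQ a b m N q (y' ::ₘ Y) o ≤ 2 := by
  classical
  set f : ℕ → ℝ := fun j => if oext a b m o j ≤ y ∧ y < oext a b m o (j + 1) then (1:ℝ) else 0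
  set g : ℕ → ℝ := fun j => if oext a b m o j ≤ y' ∧ y' < oext a b m o (j + 1) then (1:ℝ) else 0
  have key : uQ a b m N q (y ::ₘ Y) o - uQ a b m N q (y' ::ₘ Y) o
      ≤ ∑ j ∈ Finset.range (m + 1), (f j + g j) := by
    unfold uQ
    rw [neg_sub_neg, ← Finset.sum_sub_distrib]
    apply Finset.sum_le_sum
    intro j hj
    have h1 : (cnt (y ::ₘ Y) (oext a b m o j) (oext a b m o (j+1)) : ℝ)
        = (cnt Y (oext a b m o j) (oext a b m o (j+1)) : ℝ) + f j := by
      rw [cnt_cons]; push_cast; simp only [f]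
    have h2 : (cnt (y' ::ₘ Y) (oext a b m o j) (oext a b m o (j+1)) : ℝ)
        = (cnt Y (oext a b m o j) (oext a b m o (j+1)) : ℝ) + g j := by
      rw [cnt_cons]; push_cast; simp only [g]
    rw [h1, h2]
    have habs := abs_sub_abs_le_abs_sub
      ((cnt Y (oext a b m o j) (oext a b m o (j+1)) : ℝ) + g j - (q (j+1) - q j) * N)
      ((cnt Y (oext a b m o j) (oext a b m o (j+1)) : ℝ) + f j - (q (j+1) - q j) * N)
    have hfg : |((cnt Y (oext a b m o j) (oext a b m o (j+1)) : ℝ) + g j - (q (j+1) - q j) * N)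
        - ((cnt Y (oext a b m o j) (oext a b m o (j+1)) : ℝ) + f j - (q (j+1) - q j) * N)|
        = |g j - f j| := by ring_nf
    have : |g j - f j| ≤ f j + g j := by
      simp only [f, g]; split_ifs <;> norm_num
    linarith
  have hf := ind_sum_le_one a b hab m o ho y
  have hg := ind_sum_le_one a b hab m o ho y'
  rw [Finset.sum_add_distrib] at key
  linarith

lemma measurable_oext (a b : ℝ) (m j : ℕ) :
    Measurable (fun o : Fin m → ℝ => oext a b m o j) := by
  unfold oext
  by_cases h : 1 ≤ j ∧ j ≤ m
  · simp only [dif_pos h]; exact measurable_pi_apply _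
  · simp only [dif_neg h]; exact measurable_const

lemma measurable_cnt (a b : ℝ) (m j : ℕ) (X : Multiset ℝ) :
    Measurable (fun o : Fin m → ℝ =>
      (cnt X (oext a b m o j) (oext a b m o (j + 1)) : ℝ)) := by
  induction X using Multiset.induction with
  | empty => simp [cnt]
  | cons x X ih =>
    have : (fun o : Fin m → ℝ => (cnt (x ::ₘ X) (oext a b m o j) (oext a b m o (j+1)) : ℝ))
        = fun o => (cnt X (oext a b m o j) (oext a b m o (j+1)) : ℝ)
          + (if oext a b m o j ≤ x ∧ x < oext a b m o (j+1) then (1:ℝ) else 0) := by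
      funext o; rw [cnt_cons]; push_cast; split_ifs <;> simp
    rw [this]
    apply ih.add
    apply Measurable.ite _ measurable_const measurable_const
    exact MeasurableSet.inter
      (measurableSet_le (measurable_oext a b m j) measurable_const)
      (measurableSet_lt measurable_const (measurable_oext a b m (j+1)))

lemma measurable_uQ (a b : ℝ) (m N : ℕ) (q : ℕ → ℝ) (X : Multiset ℝ) :
    Measurable (fun o : Fin m → ℝ => uQ a b m N q X o) := by
  unfold uQ
  apply Measurable.neg
  apply Finset.measurable_sum
  intro j _
  exact ((measurable_cnt a b m j X).sub measurable_const).abs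

lemma measurableSet_Oup (a b : ℝ) (m : ℕ) : MeasurableSet (Oup a b m) := by
  have : Oup a b m = (⋂ (i : Fin m) (k : Fin m) (_ : i ≤ k), {o : Fin m → ℝ | o i ≤ o k})
      ∩ ⋂ (i : Fin m), ({o : Fin m → ℝ | a ≤ o i} ∩ {o | o i ≤ b}) := by
    ext o
    simp only [Oup, Set.mem_inter_iff, Set.mem_iInter, Set.mem_setOf_eq, Monotone]
  rw [this]
  apply MeasurableSet.inter
  · exact MeasurableSet.iInter fun i => MeasurableSet.iInter fun k =>
      MeasurableSet.iInter fun _ =>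
        measurableSet_le (measurable_pi_apply i) (measurable_pi_apply k)
  · exact MeasurableSet.iInter fun i => MeasurableSet.inter
      (measurableSet_le measurable_const (measurable_pi_apply i))
      (measurableSet_le (measurable_pi_apply i) measurable_const)

lemma Oup_volume_lt_top (a b : ℝ) (m : ℕ) : volume (Oup a b m) < ⊤ := by
  have hsub : Oup a b m ⊆ Set.Icc (fun _ : Fin m => a) (fun _ => b) := by
    intro o ho
    constructor <;> intro i
    · exact (ho.2 i).1
    · exact (ho.2 i).2
  calc volume (Oup a b m) ≤ volume (Set.Icc (fun _ : Fin m => a) (fun _ => b)) :=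
        measure_mono hsub
    _ = ∏ _i : Fin m, ENNReal.ofReal (b - a) := Real.volume_Icc_pi
    _ < ⊤ := by
        apply ENNReal.prod_lt_top
        intro i _
        exact ENNReal.ofReal_lt_top

lemma uQ_nonpos (a b : ℝ) (m N : ℕ) (q : ℕ → ℝ) (X : Multiset ℝ) (o : Fin m → ℝ) :
    uQ a b m N q X o ≤ 0 := by
  unfold uQ
  simp only [neg_nonpos]
  exact Finset.sum_nonneg fun j _ => abs_nonneg _

lemma integrableOn_exp_uQ (a b : ℝ) (m N : ℕ) (q : ℕ → ℝ) (X : Multiset ℝ)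
    (c : ℝ) (hc : 0 ≤ c) (T : Set (Fin m → ℝ)) (hT : T ⊆ Oup a b m) (hTm : MeasurableSet T) :
    IntegrableOn (fun o => Real.exp (c * uQ a b m N q X o)) T := by
  apply Measure.integrableOn_of_bounded (M := 1)
  · exact ne_top_of_le_ne_top (Oup_volume_lt_top a b m).ne (measure_mono hT)
  · exact ((measurable_uQ a b m N q X).const_mul c).exp.aestronglyMeasurable
  · filter_upwards with o
    rw [Real.norm_eq_abs, abs_of_pos (Real.exp_pos _)]
    rw [← Real.exp_zero]
    apply Real.exp_le_exp.mpr
    exact mul_nonpos_of_nonneg_of_nonpos hc (uQ_nonpos a b m N q X o)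

/-- The mechanism `M_Q`, whose output density over `O↗` is proportional to
`exp((ε/(2·Δ))·u_Q(X,o))` with `Δ = 2`, satisfies `ε`-differential privacy: for swap-neighboring
datasets `X, X'` and every measurable `S ⊆ O↗`,
`(∫_S e^{(ε/4)u_Q(X,o)} do)·(∫_{O↗} e^{(ε/4)u_Q(X',o)} do)
  ≤ e^ε·(∫_S e^{(ε/4)u_Q(X',o)} do)·(∫_{O↗} e^{(ε/4)u_Q(X,o)} do)`. -/
theorem jointExp_dp (a b : ℝ) (hab : a < b) (n m : ℕ) (hn : 1 ≤ n) (hm : 1 ≤ m)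
    (q : ℕ → ℝ) (hq0 : q 0 = 0) (hqtop : q (m + 1) = 1)
    (hqmono : ∀ j ≤ m, q j < q (j + 1))
    (ε : ℝ) (hε : 0 < ε)
    (X X' : Multiset ℝ)
    (hXcard : Multiset.card X = n) (hX'card : Multiset.card X' = n)
    (hXmem : ∀ x ∈ X, a ≤ x ∧ x ≤ b) (hX'mem : ∀ x ∈ X', a ≤ x ∧ x ≤ b)
    (hneighbor : ∃ (Y : Multiset ℝ) (y y' : ℝ), X = y ::ₘ Y ∧ X' = y' ::ₘ Y)
    (S : Set (Fin m → ℝ)) (hSmeas : MeasurableSet S) (hS : S ⊆ Oup a b m) :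
    (∫ o in S, Real.exp ((ε / 4) * uQ a b m n q X o)) *
      (∫ o in Oup a b m, Real.exp ((ε / 4) * uQ a b m n q X' o))
      ≤ Real.exp ε * ((∫ o in S, Real.exp ((ε / 4) * uQ a b m n q X' o)) *
        (∫ o in Oup a b m, Real.exp ((ε / 4) * uQ a b m n q X o))) := by
  obtain ⟨Y, y, y', hXY, hX'Y⟩ := hneighbor
  have hc : (0:ℝ) ≤ ε / 4 := by linarith
  -- pointwise estimates
  have hpt : ∀ o ∈ Oup a b m,
      Real.exp ((ε / 4) * uQ a b m n q X o)
        ≤ Real.exp (ε / 2) * Real.exp ((ε / 4) * uQ a b m n q X' o) := by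
    intro o ho
    rw [← Real.exp_add, Real.exp_le_exp]
    have hd : uQ a b m n q X o - uQ a b m n q X' o ≤ 2 := by
      rw [hXY, hX'Y]; exact uQ_diff_le a b hab m n q Y y y' o ho
    nlinarith
  have hpt' : ∀ o ∈ Oup a b m,
      Real.exp ((ε / 4) * uQ a b m n q X' o)
        ≤ Real.exp (ε / 2) * Real.exp ((ε / 4) * uQ a b m n q X o) := by
    intro o ho
    rw [← Real.exp_add, Real.exp_le_exp]
    have hd : uQ a b m n q X' o - uQ a b m n q X o ≤ 2 := by
      rw [hXY, hX'Y]; exact uQ_diff_le a b hab m n q Y y' y o ho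
    nlinarith
  have hOm := measurableSet_Oup a b m
  have hIX_S := integrableOn_exp_uQ a b m n q X (ε/4) hc S hS hSmeas
  have hIX'_S := integrableOn_exp_uQ a b m n q X' (ε/4) hc S hS hSmeas
  have hIX_O := integrableOn_exp_uQ a b m n q X (ε/4) hc (Oup a b m) (le_refl _) hOm
  have hIX'_O := integrableOn_exp_uQ a b m n q X' (ε/4) hc (Oup a b m) (le_refl _) hOm
  have h1 : (∫ o in S, Real.exp ((ε / 4) * uQ a b m n q X o))
      ≤ Real.exp (ε / 2) * ∫ o in S, Real.exp ((ε / 4) * uQ a b m n q X' o) := by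
    rw [← integral_const_mul]
    exact setIntegral_mono_on hIX_S (hIX'_S.const_mul _) hSmeas
      (fun o ho => hpt o (hS ho))
  have h2 : (∫ o in Oup a b m, Real.exp ((ε / 4) * uQ a b m n q X' o))
      ≤ Real.exp (ε / 2) * ∫ o in Oup a b m, Real.exp ((ε / 4) * uQ a b m n q X o) := by
    rw [← integral_const_mul]
    exact setIntegral_mono_on hIX'_O (hIX_O.const_mul _) hOm (fun o ho => hpt' o ho)
  have hnn1 : 0 ≤ ∫ o in S, Real.exp ((ε / 4) * uQ a b m n q X o) :=
    setIntegral_nonneg hSmeas (fun o _ => (Real.exp_pos _).le)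
  have hnn2 : 0 ≤ ∫ o in Oup a b m, Real.exp ((ε / 4) * uQ a b m n q X' o) :=
    setIntegral_nonneg hOm (fun o _ => (Real.exp_pos _).le)
  have hnn3 : 0 ≤ ∫ o in S, Real.exp ((ε / 4) * uQ a b m n q X' o) :=
    setIntegral_nonneg hSmeas (fun o _ => (Real.exp_pos _).le)
  calc (∫ o in S, Real.exp ((ε / 4) * uQ a b m n q X o)) *
        (∫ o in Oup a b m, Real.exp ((ε / 4) * uQ a b m n q X' o))
      ≤ (Real.exp (ε / 2) * ∫ o in S, Real.exp ((ε / 4) * uQ a b m n q X' o)) *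
        (Real.exp (ε / 2) * ∫ o in Oup a b m, Real.exp ((ε / 4) * uQ a b m n q X o)) := by
        apply mul_le_mul h1 h2 hnn2
        positivity
    _ = Real.exp ε * ((∫ o in S, Real.exp ((ε / 4) * uQ a b m n q X' o)) *
        (∫ o in Oup a b m, Real.exp ((ε / 4) * uQ a b m n q X o))) := by
        rw [mul_mul_mul_comm, ← Real.exp_add]
        norm_num
end

section
/- Fix ε > 0 and a dataset X of n points in [a,b] with sorted values x_1 ≤ ... ≤ x_n. Let μ be the probability measure on O↗ with density proportional to exp((ε/4)·u_Q(X,o)) with respect to m-dimensional Lebesgue measure (the output distribution of the mechanism M_Q). Then for every s = (i_1,...,i_m) ∈ S↗, μ(g_O(s)) = exp((ε/4)·u_{Q'}(X,s)) · (∏_{j=1}^m (x_{i_j + 1} − x_{i_j})) / γ(s), divided by Z_{Q'} = ∑_{s' ∈ S↗} exp((ε/4)·u_{Q'}(X,s')) · (∏_{j=1}^m (x_{i'_j + 1} − x_{i'_j})) / γ(s'). That is, the probability that M_Q lands in the cell g_O(s) equals the probability that the two-stage mechanism M_{Q'} selects sequence s, so M_Q and M_{Q'} have the same output distribution. -/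
open scoped Classical
open Finset MeasureTheory

/-- Extension of the index sequence `s = (i_1, …, i_m)` by `i_0 = 0` and `i_{m+1} = n`. -/
noncomputable def iext (n m : ℕ) (s : Fin m → Fin (n + 1)) (j : ℕ) : ℕ :=
  if h : 1 ≤ j ∧ j ≤ m then (s ⟨j - 1, by omega⟩ : ℕ) else if j = 0 then 0 else n

/-- The discrete utility `u_{Q'}(X, s) = -∑_{j=1}^{m+1} |(i_j - i_{j-1}) - (q_j - q_{j-1})·n|`. -/
noncomputable def uQ' (n m : ℕ) (q : ℕ → ℝ) (s : Fin m → Fin (n + 1)) : ℝ :=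
  -∑ j ∈ Finset.range (m + 1),
    |((iext n m s (j + 1) : ℝ) - (iext n m s j : ℝ)) - (q (j + 1) - q j) * n|

/-- The scale factor `γ(s) = ∏_{i ∈ I} c_i(s)!`. -/
noncomputable def gammaFun (n m : ℕ) (s : Fin m → Fin (n + 1)) : ℝ :=
  ∏ i : Fin (n + 1), (Nat.factorial ((Finset.univ.filter (fun j => s j = i)).card) : ℝ)

/-- The cell `g_O(s) = {o ∈ O↗ : x_{i_j} ≤ o_j < x_{i_j + 1} for all j}`. -/
def cell (a b : ℝ) (n m : ℕ) (x : ℕ → ℝ) (s : Fin m → Fin (n + 1)) : Set (Fin m → ℝ) :=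
  {o | (Monotone o ∧ ∀ i, a ≤ o i ∧ o i ≤ b) ∧
    ∀ j, x (s j : ℕ) ≤ o j ∧ o j < x ((s j : ℕ) + 1)}

lemma measurableSet_mono (m : ℕ) : MeasurableSet {o : Fin m → ℝ | Monotone o} := by
  have : {o : Fin m → ℝ | Monotone o} = ⋂ (i : Fin m) (j : Fin m) (_ : i ≤ j), {o | o i ≤ o j} := by
    ext o; simp only [Set.mem_setOf_eq, Set.mem_iInter]
    exact ⟨fun h i j hij => h hij, fun h i j hij => h i j hij⟩
  rw [this]
  exact MeasurableSet.iInter fun i => MeasurableSet.iInter fun j => MeasurableSet.iInter fun _ =>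
    measurableSet_le (measurable_pi_apply i) (measurable_pi_apply j)

lemma measurableSet_inj (m : ℕ) : MeasurableSet {o : Fin m → ℝ | Function.Injective o} := by
  have : {o : Fin m → ℝ | Function.Injective o} =
      ⋂ (i : Fin m) (j : Fin m) (_ : i ≠ j), {o | o i = o j}ᶜ := by
    ext o; simp only [Set.mem_setOf_eq, Set.mem_iInter, Set.mem_compl_iff]
    constructor
    · intro h i j hij hoij; exact hij (h hoij)
    · intro h i j hoij; by_contra hij; exact h i j hij hoij
  rw [this]
  exact MeasurableSet.iInter fun i => MeasurableSet.iInter fun j => MeasurableSet.iInter fun _ =>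
    (measurableSet_eq_fun (measurable_pi_apply i) (measurable_pi_apply j)).compl

lemma null_eq_coords (m : ℕ) (i j : Fin m) (hij : i ≠ j) :
    volume {o : Fin m → ℝ | o i = o j} = 0 := by
  have : {o : Fin m → ℝ | o i = o j} =
      (LinearMap.ker ((LinearMap.proj i : (Fin m → ℝ) →ₗ[ℝ] ℝ) - LinearMap.proj j) : Set (Fin m → ℝ)) := by
    ext o; simp [LinearMap.sub_apply, sub_eq_zero]
  rw [this]
  apply MeasureTheory.Measure.addHaar_submodule
  intro h
  have h1 : (Pi.single i 1 : Fin m → ℝ) ∈ (⊤ : Submodule ℝ (Fin m → ℝ)) := trivial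
  rw [← h, LinearMap.mem_ker] at h1
  simp [LinearMap.sub_apply, Pi.single_apply, hij.symm] at h1

lemma null_noninj (m : ℕ) : volume {o : Fin m → ℝ | ¬ Function.Injective o} = 0 := by
  refine measure_mono_null (t := ⋃ (i : Fin m) (j : Fin m) (_ : i ≠ j), {o : Fin m → ℝ | o i = o j}) ?_ ?_
  · intro o ho
    simp only [Set.mem_setOf_eq, Function.Injective] at ho
    push_neg at ho
    obtain ⟨i, j, hoij, hij⟩ := ho
    exact Set.mem_iUnion.2 ⟨i, Set.mem_iUnion.2 ⟨j, Set.mem_iUnion.2 ⟨hij, hoij⟩⟩⟩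
  · refine measure_iUnion_null fun i => measure_iUnion_null fun j => ?_
    by_cases hij : i = j
    · simp [hij]
    · simpa [hij] using null_eq_coords m i j hij

lemma null_hyper (m : ℕ) (j : Fin m) (c : ℝ) : volume {o : Fin m → ℝ | o j = c} = 0 := by
  rw [MeasureTheory.volume_pi]
  exact MeasureTheory.Measure.pi_hyperplane (fun _ => (volume : Measure ℝ)) j c

lemma mp_comp_perm (m : ℕ) (σ : Equiv.Perm (Fin m)) :
    MeasurePreserving (fun o : Fin m → ℝ => o ∘ σ) volume volume := by
  have h := MeasureTheory.volume_measurePreserving_piCongrLeft (fun _ : Fin m => ℝ) σ.symm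
  have heq : ⇑(MeasurableEquiv.piCongrLeft (fun _ : Fin m => ℝ) σ.symm)
      = fun o : Fin m → ℝ => o ∘ σ := by
    ext o i
    simp [MeasurableEquiv.piCongrLeft, Equiv.piCongrLeft, Equiv.piCongrLeft']
  rwa [heq] at h

section Helpers
variable {n m : ℕ} {x : ℕ → ℝ}

lemma xle (hxmono : ∀ i ≤ n, x i ≤ x (i + 1)) :
    ∀ {i j : ℕ}, i ≤ j → j ≤ n + 1 → x i ≤ x j := by
  intro i j hij hj
  induction j with
  | zero => have : i = 0 := Nat.le_zero.mp hij; simp [this]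
  | succ k ih =>
    rcases Nat.eq_or_lt_of_le hij with h | h
    · simp [h]
    · exact le_trans (ih (by omega) (by omega)) (hxmono k (by omega))

lemma iext_le (s : Fin m → Fin (n + 1)) (j : ℕ) : iext n m s j ≤ n := by
  unfold iext
  split
  · exact Fin.is_le _
  · split <;> omega

lemma iext_mono (s : Fin m → Fin (n + 1)) (hs : Monotone s) {j k : ℕ}
    (hjk : j ≤ k) : iext n m s j ≤ iext n m s k := by
  unfold iext
  split <;> rename_i h1
  · split <;> rename_i h2
    · exact hs (by simp [Fin.mk_le_mk]; omega)
    · split <;> rename_i h3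
      · omega
      · exact Fin.is_le _
  · split <;> rename_i h3
    · simp
    · split <;> rename_i h2
      · omega
      · split <;> omega

lemma cnt_eq_card (X : Multiset ℝ) (hX : X = (Multiset.range n).map (fun i => x (i + 1)))
    (u v : ℝ) :
    cnt X u v = ((Finset.range n).filter (fun i => u ≤ x (i + 1) ∧ x (i + 1) < v)).card := by
  subst hX
  unfold cnt
  rw [Multiset.filter_map, Multiset.card_map]
  rfl

lemma cnt_opencell (hx0 : x 0 = a') (hxtop : x (n + 1) = b')
    (hxmono : ∀ i ≤ n, x i ≤ x (i + 1))
    (X : Multiset ℝ) (hX : X = (Multiset.range n).map (fun i => x (i + 1)))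
    (s : Fin m → Fin (n + 1)) (o : Fin m → ℝ)
    (ho : ∀ j, x (s j : ℕ) < o j ∧ o j < x ((s j : ℕ) + 1))
    {j : ℕ} (hj : j ≤ m) :
    cnt X (oext a' b' m o j) (oext a' b' m o (j + 1)) = iext n m s (j + 1) - iext n m s j := by
  rw [cnt_eq_card (x := x) X hX]
  have key : ∀ i ∈ Finset.range n,
      ((oext a' b' m o j ≤ x (i + 1) ∧ x (i + 1) < oext a' b' m o (j + 1)) ↔
        (iext n m s j ≤ i ∧ i < iext n m s (j + 1))) := by
    intro i hi
    rw [Finset.mem_range] at hi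
    have h1 : oext a' b' m o j ≤ x (i + 1) ↔ iext n m s j ≤ i := by
      by_cases h : 1 ≤ j ∧ j ≤ m
      · simp only [oext, iext, dif_pos h]
        set J : Fin m := ⟨j - 1, by omega⟩
        constructor
        · intro hle
          by_contra hlt
          push_neg at hlt
          have hx1 : x (i + 1) ≤ x (s J : ℕ) := xle hxmono (by omega) (by have := (s J).is_le; omega)
          exact absurd hle (not_le.2 (lt_of_le_of_lt hx1 (ho J).1))
        · intro hge
          have hx1 : x ((s J : ℕ) + 1) ≤ x (i + 1) := xle hxmono (by omega) (by omega)
          exact le_of_lt (lt_of_lt_of_le (ho J).2 hx1)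
      · have hj0 : j = 0 := by omega
        simp only [oext, iext, dif_neg h, if_pos hj0]
        refine ⟨fun _ => Nat.zero_le i, fun _ => ?_⟩
        rw [← hx0]
        exact xle hxmono (Nat.zero_le _) (by omega)
    have h2 : x (i + 1) < oext a' b' m o (j + 1) ↔ i < iext n m s (j + 1) := by
      by_cases h : 1 ≤ j + 1 ∧ j + 1 ≤ m
      · simp only [oext, iext, dif_pos h]
        set J : Fin m := ⟨j + 1 - 1, by omega⟩
        constructor
        · intro hlt
          by_contra hge
          push_neg at hge
          have hx1 : x ((s J : ℕ) + 1) ≤ x (i + 1) := xle hxmono (by omega) (by omega)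
          exact absurd hlt (not_lt.2 (le_of_lt (lt_of_lt_of_le (ho J).2 hx1)))
        · intro hlt
          have hx1 : x (i + 1) ≤ x (s J : ℕ) := xle hxmono (by omega) (by have := (s J).is_le; omega)
          exact lt_of_le_of_lt hx1 (ho J).1
      · simp only [oext, iext, dif_neg h]
        rw [if_neg (by omega : ¬ j + 1 = 0), if_neg (by omega : ¬ j + 1 = 0)]
        have hb : x (i + 1) ≤ b' := hxtop ▸ xle hxmono (by omega) (le_refl _)
        constructor
        · intro _; exact hi
        · intro _; linarith
    rw [h1, h2]
  rw [Finset.filter_congr key]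
  have : (Finset.range n).filter (fun i => iext n m s j ≤ i ∧ i < iext n m s (j + 1))
      = Finset.Ico (iext n m s j) (iext n m s (j + 1)) := by
    ext k
    simp only [Finset.mem_filter, Finset.mem_range, Finset.mem_Ico]
    have := iext_le s (j + 1)
    omega
  rw [this, Nat.card_Ico]

lemma uQ_eq_uQ' {a' b' : ℝ} (hx0 : x 0 = a') (hxtop : x (n + 1) = b')
    (hxmono : ∀ i ≤ n, x i ≤ x (i + 1)) (q : ℕ → ℝ)
    (X : Multiset ℝ) (hX : X = (Multiset.range n).map (fun i => x (i + 1)))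
    (s : Fin m → Fin (n + 1)) (hs : Monotone s) (o : Fin m → ℝ)
    (ho : ∀ j, x (s j : ℕ) < o j ∧ o j < x ((s j : ℕ) + 1)) :
    uQ a' b' m n q X o = uQ' n m q s := by
  unfold uQ uQ'
  congr 1
  refine Finset.sum_congr rfl fun j hj => ?_
  rw [Finset.mem_range] at hj
  rw [cnt_opencell hx0 hxtop hxmono X hX s o ho (by omega)]
  rw [Nat.cast_sub (iext_mono s hs (Nat.le_succ j))]

lemma vol_cell {a' b' : ℝ} (hx0 : x 0 = a') (hxtop : x (n + 1) = b')
    (hxmono : ∀ i ≤ n, x i ≤ x (i + 1))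
    (s : Fin m → Fin (n + 1)) (hs : Monotone s) :
    volume (cell a' b' n m x s)
      = ENNReal.ofReal ((∏ j, (x ((s j : ℕ) + 1) - x (s j : ℕ))) / gammaFun n m s) := by
  set box : Set (Fin m → ℝ) :=
    Set.pi Set.univ (fun j : Fin m => Set.Ioo (x (s j : ℕ)) (x ((s j : ℕ) + 1))) with hbox
  have hboxm : MeasurableSet box := MeasurableSet.univ_pi fun j => measurableSet_Ioo
  set Inj : Set (Fin m → ℝ) := {o | Function.Injective o} with hInj
  set Mono : Set (Fin m → ℝ) := {o | Monotone o} with hMono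
  set T : Equiv.Perm (Fin m) → Set (Fin m → ℝ) :=
    fun σ => box ∩ Inj ∩ {o | Monotone (o ∘ σ)} with hT
  set G : Finset (Equiv.Perm (Fin m)) := Finset.univ.filter (fun σ => s ∘ σ = s) with hG
  -- basic facts
  have hbox_sub_cell : box ∩ Mono ⊆ cell a' b' n m x s := by
    rintro o ⟨hob, hom⟩
    have hoj : ∀ j, x (s j : ℕ) < o j ∧ o j < x ((s j : ℕ) + 1) := fun j => hob j (Set.mem_univ j)
    refine ⟨⟨hom, fun j => ?_⟩, fun j => ⟨le_of_lt (hoj j).1, (hoj j).2⟩⟩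
    constructor
    · calc a' = x 0 := hx0.symm
        _ ≤ x (s j : ℕ) := xle hxmono (Nat.zero_le _) (by have := (s j).is_le; omega)
        _ ≤ o j := le_of_lt (hoj j).1
    · calc o j ≤ x ((s j : ℕ) + 1) := le_of_lt (hoj j).2
        _ ≤ x (n + 1) := xle hxmono (by have := (s j).is_le; omega) le_rfl
        _ = b' := hxtop
  -- step 1 : volume cell = volume (box ∩ Mono)
  have step1 : volume (cell a' b' n m x s) = volume (box ∩ Mono) := by
    apply measure_congr
    rw [MeasureTheory.ae_eq_set]
    constructor
    · refine measure_mono_null (t := ⋃ j : Fin m, {o : Fin m → ℝ | o j = x (s j : ℕ)}) ?_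
        (measure_iUnion_null fun j => null_hyper m j _)
      rintro o ⟨⟨⟨hom, _⟩, hc⟩, hnb⟩
      simp only [Set.mem_iUnion, Set.mem_setOf_eq]
      by_contra hno
      push_neg at hno
      exact hnb ⟨fun j _ => ⟨lt_of_le_of_ne (hc j).1 (fun h => hno j h.symm), (hc j).2⟩, hom⟩
    · have hemp : (box ∩ Mono) \ cell a' b' n m x s = ∅ :=
        Set.diff_eq_empty.2 hbox_sub_cell
      rw [hemp]
      exact measure_empty
  -- step 1b : volume (box ∩ Mono) = volume (T 1)
  have hT1 : T 1 = box ∩ Inj ∩ Mono := by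
    simp only [hT, Equiv.Perm.coe_one, Function.comp_id]; rfl
  have step1b : volume (box ∩ Mono) = volume (T 1) := by
    rw [hT1]
    apply measure_congr
    rw [MeasureTheory.ae_eq_set]
    constructor
    · refine measure_mono_null (t := {o : Fin m → ℝ | ¬ Function.Injective o}) ?_ (null_noninj m)
      rintro o ⟨⟨hob, hom⟩, hni⟩
      simp only [Set.mem_setOf_eq]
      intro hinj
      exact hni ⟨⟨hob, hinj⟩, hom⟩
    · have hemp : (box ∩ Inj ∩ Mono) \ (box ∩ Mono) = ∅ := by
        apply Set.diff_eq_empty.2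
        rintro o ⟨⟨hob, _⟩, hom⟩
        exact ⟨hob, hom⟩
      rw [hemp]
      exact measure_empty
  -- measurability of T σ
  have hTmeas : ∀ σ : Equiv.Perm (Fin m), MeasurableSet (T σ) := by
    intro σ
    refine (hboxm.inter (measurableSet_inj m)).inter ?_
    have : {o : Fin m → ℝ | Monotone (o ∘ σ)} = (fun o : Fin m → ℝ => o ∘ σ) ⁻¹' Mono := rfl
    rw [this]
    exact (mp_comp_perm m σ).measurable (measurableSet_mono m)
  -- covering
  have hcover : box ∩ Inj = ⋃ σ ∈ G, T σ := by
    apply Set.Subset.antisymm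
    · intro o ⟨hob, hoi⟩
      have hoj : ∀ j, x (s j : ℕ) < o j ∧ o j < x ((s j : ℕ) + 1) := fun j => hob j (Set.mem_univ j)
      set σ := Tuple.sort o with hσ
      have hmono : Monotone (o ∘ σ) := Tuple.monotone_sort o
      have hms : Monotone (s ∘ σ) := by
        intro j j' hjj'
        by_contra hlt
        push_neg at hlt
        have h2 : (s (σ j') : ℕ) + 1 ≤ (s (σ j) : ℕ) := hlt
        have h3 : x ((s (σ j') : ℕ) + 1) ≤ x (s (σ j) : ℕ) :=
          xle hxmono h2 (by have := (s (σ j)).is_le; omega)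
        have h4 : o (σ j') < o (σ j) := by
          calc o (σ j') < x ((s (σ j') : ℕ) + 1) := (hoj (σ j')).2
            _ ≤ x (s (σ j) : ℕ) := h3
            _ < o (σ j) := (hoj (σ j)).1
        exact absurd (hmono hjj') (not_le.2 h4)
      have hsσ : s ∘ σ = s := by
        have := Tuple.unique_monotone (f := s) (σ := σ) (τ := 1) hms
          (by simpa using hs)
        simpa using this
      have hσG : σ ∈ G := by rw [hG]; exact Finset.mem_filter.2 ⟨Finset.mem_univ σ, hsσ⟩
      exact Set.mem_biUnion hσG ⟨⟨hob, hoi⟩, hmono⟩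
    · intro o ho
      obtain ⟨σ, _, hoσ⟩ := Set.mem_iUnion₂.1 ho
      exact hoσ.1
  -- disjointness
  have hdisj : (G : Set (Equiv.Perm (Fin m))).PairwiseDisjoint T := by
    intro σ hσ τ hτ hne
    refine Set.disjoint_left.2 fun o hoσ hoτ => hne ?_
    have h1 : o ∘ σ = o ∘ τ := Tuple.unique_monotone hoσ.2 hoτ.2
    have hinj : Function.Injective o := hoσ.1.2
    apply Equiv.ext
    intro j
    exact hinj (congrFun h1 j)
  -- volume (T σ) = volume (T 1)
  have hTeq : ∀ σ ∈ G, volume (T σ) = volume (T 1) := by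
    intro σ hσ
    have hsσ : s ∘ σ = s := by simpa [hG] using hσ
    have hpre : T σ = (fun o : Fin m → ℝ => o ∘ σ) ⁻¹' (T 1) := by
      rw [hT1]
      ext o
      simp only [Set.mem_inter_iff, Set.mem_preimage, hT, Set.mem_setOf_eq]
      have hbe : o ∘ σ ∈ box ↔ o ∈ box := by
        simp only [hbox, Set.mem_pi, Set.mem_univ, forall_true_left, Function.comp_apply]
        have e : ∀ j, s (σ j) = s j := fun j => congrFun hsσ j
        constructor
        · intro h k
          have h2 := h (σ.symm k)
          rw [Equiv.apply_symm_apply] at h2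
          have e2 : s k = s (σ.symm k) := by
            have := e (σ.symm k)
            rwa [Equiv.apply_symm_apply] at this
          rwa [← e2] at h2
        · intro h j
          have h2 := h (σ j)
          rwa [e j] at h2
      have hie : Function.Injective (o ∘ σ) ↔ Function.Injective o :=
        ⟨fun h => by simpa using h.comp σ.symm.injective, fun h => h.comp σ.injective⟩
      constructor
      · rintro ⟨⟨hb, hi⟩, hm⟩
        exact ⟨⟨hbe.2 hb, hie.2 hi⟩, hm⟩
      · rintro ⟨⟨hb, hi⟩, hm⟩
        exact ⟨⟨hbe.1 hb, hie.1 hi⟩, hm⟩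
    rw [hpre]
    exact (mp_comp_perm m σ).measure_preimage (hTmeas 1).nullMeasurableSet
  -- volume box = volume (box ∩ Inj)
  have step3 : volume box = volume (box ∩ Inj) := by
    apply (measure_congr _).symm
    rw [MeasureTheory.ae_eq_set]
    constructor
    · rw [Set.diff_eq_empty.2 Set.inter_subset_left]
      exact measure_empty
    · refine measure_mono_null (t := {o : Fin m → ℝ | ¬ Function.Injective o}) ?_ (null_noninj m)
      rintro o ⟨hob, hni⟩
      simp only [Set.mem_setOf_eq]
      intro hinj
      exact hni ⟨hob, hinj⟩
  -- sum
  have step4 : volume (box ∩ Inj) = (G.card : ENNReal) * volume (T 1) := by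
    rw [hcover, measure_biUnion_finset hdisj (fun σ _ => hTmeas σ)]
    rw [Finset.sum_congr rfl hTeq, Finset.sum_const, nsmul_eq_mul]
  -- volume box explicitly
  have hgap : ∀ j : Fin m, 0 ≤ x ((s j : ℕ) + 1) - x (s j : ℕ) := by
    intro j
    have := hxmono (s j : ℕ) (s j).is_le
    linarith
  have step5 : volume box = ENNReal.ofReal (∏ j, (x ((s j : ℕ) + 1) - x (s j : ℕ))) := by
    rw [hbox, volume_pi_pi]
    rw [Finset.prod_congr rfl (fun j _ => Real.volume_Ioo (a := x (s j : ℕ)) (b := x ((s j : ℕ) + 1)))]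
    rw [← ENNReal.ofReal_prod_of_nonneg (fun j _ => hgap j)]
  -- cardinality of G
  have hcard : (G.card : ℝ) = gammaFun n m s := by
    have h1 : G.card = Fintype.card {σ : Equiv.Perm (Fin m) // s ∘ σ = s} :=
      (Fintype.card_subtype _).symm
    rw [h1, DomMulAct.stabilizer_card s]
    rw [gammaFun, Nat.cast_prod]
    refine Finset.prod_congr rfl fun i _ => ?_
    rw [Fintype.card_subtype]
  have hγpos : 0 < gammaFun n m s := by
    rw [gammaFun]
    exact Finset.prod_pos fun i _ => by positivity
  have hGcard_ne : (G.card : ENNReal) ≠ 0 := by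
    have : 0 < gammaFun n m s := hγpos
    rw [← hcard] at this
    have h2 : 0 < G.card := by exact_mod_cast this
    exact_mod_cast h2.ne'
  -- conclude
  have key : ENNReal.ofReal (∏ j, (x ((s j : ℕ) + 1) - x (s j : ℕ)))
      = (G.card : ENNReal) * volume (cell a' b' n m x s) := by
    rw [← step5, step3, step4, ← step1b, ← step1]
  have hfin : (G.card : ENNReal) ≠ ⊤ := ENNReal.natCast_ne_top _
  rw [ENNReal.ofReal_div_of_pos hγpos]
  have : ENNReal.ofReal (gammaFun n m s) = (G.card : ENNReal) := by
    rw [← hcard, ENNReal.ofReal_natCast]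
  rw [this]
  rw [ENNReal.eq_div_iff hGcard_ne hfin]
  exact key.symm

lemma cells_disjoint {a' b' : ℝ} (hxmono : ∀ i ≤ n, x i ≤ x (i + 1))
    (s s' : Fin m → Fin (n + 1)) (hne : s ≠ s') :
    Disjoint (cell a' b' n m x s) (cell a' b' n m x s') := by
  refine Set.disjoint_left.2 fun o hos hos' => hne ?_
  funext j
  have h1 := hos.2 j
  have h2 := hos'.2 j
  by_contra hj
  rcases lt_or_gt_of_ne (fun h : (s j : ℕ) = (s' j : ℕ) => hj (Fin.ext h)) with h | h
  · have hx1 : x ((s j : ℕ) + 1) ≤ x (s' j : ℕ) :=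
      xle hxmono (by omega) (by have := (s' j).is_le; omega)
    linarith [h1.2, h2.1]
  · have hx1 : x ((s' j : ℕ) + 1) ≤ x (s j : ℕ) :=
      xle hxmono (by omega) (by have := (s j).is_le; omega)
    linarith [h1.1, h2.2]

lemma Oup_cover {a' b' : ℝ} (hx0 : x 0 = a') (hxtop : x (n + 1) = b')
    (hxmono : ∀ i ≤ n, x i ≤ x (i + 1)) (o : Fin m → ℝ)
    (ho : o ∈ Oup a' b' m) (hob : ∀ j, o j ≠ b') :
    ∃ s : Fin m → Fin (n + 1), Monotone s ∧ o ∈ cell a' b' n m x s := by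
  set P : Fin m → ℕ → Prop := fun j i => x i ≤ o j with hP
  set s : Fin m → Fin (n + 1) :=
    fun j => ⟨Nat.findGreatest (P j) n, Nat.lt_succ_of_le (Nat.findGreatest_le n)⟩ with hsdef
  have hspec : ∀ j, x (s j : ℕ) ≤ o j := by
    intro j
    exact Nat.findGreatest_spec (Nat.zero_le n) (show P j 0 from by simp only [hP]; rw [hx0]; exact (ho.2 j).1)
  have hgt : ∀ j, o j < x ((s j : ℕ) + 1) := by
    intro j
    rcases Nat.lt_or_ge (s j : ℕ) n with h | h
    · have hng : ¬ P j ((s j : ℕ) + 1) :=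
        Nat.findGreatest_is_greatest (by exact Nat.lt_succ_self _) (by exact h)
      exact not_le.1 hng
    · have hsn : (s j : ℕ) = n := le_antisymm (Nat.findGreatest_le n) h
      rw [hsn, hxtop]
      exact lt_of_le_of_ne (ho.2 j).2 (hob j)
  refine ⟨s, ?_, ⟨⟨ho.1, ho.2⟩, fun j => ⟨hspec j, hgt j⟩⟩⟩
  intro j j' hjj'
  rw [Fin.le_def]
  simp only [hsdef]
  by_contra hlt
  push_neg at hlt
  have hng : ¬ P j' (Nat.findGreatest (P j) n) :=
    Nat.findGreatest_is_greatest hlt (Nat.findGreatest_le n)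
  exact hng (le_trans (hspec j) (ho.1 hjj'))

lemma measurableSet_Oup_s7 (a' b' : ℝ) : MeasurableSet (Oup a' b' m) := by
  have : Oup a' b' m = {o : Fin m → ℝ | Monotone o} ∩
      ⋂ i : Fin m, ({o : Fin m → ℝ | a' ≤ o i} ∩ {o : Fin m → ℝ | o i ≤ b'}) := by
    ext o
    simp only [Oup, Set.mem_setOf_eq, Set.mem_inter_iff, Set.mem_iInter]
  rw [this]
  exact (measurableSet_mono m).inter (MeasurableSet.iInter fun i =>
    (measurableSet_le measurable_const (measurable_pi_apply i)).inter
      (measurableSet_le (measurable_pi_apply i) measurable_const))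

lemma measurableSet_cell (a' b' : ℝ) (s : Fin m → Fin (n + 1)) :
    MeasurableSet (cell a' b' n m x s) := by
  have : cell a' b' n m x s = Oup a' b' m ∩
      ⋂ j : Fin m, ({o : Fin m → ℝ | x (s j : ℕ) ≤ o j} ∩
        {o : Fin m → ℝ | o j < x ((s j : ℕ) + 1)}) := by
    ext o
    simp only [cell, Oup, Set.mem_setOf_eq, Set.mem_inter_iff, Set.mem_iInter]
  rw [this]
  exact (measurableSet_Oup_s7 a' b').inter (MeasurableSet.iInter fun j =>
    (measurableSet_le measurable_const (measurable_pi_apply j)).inter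
      (measurableSet_lt (measurable_pi_apply j) measurable_const))

end Helpers

/-- Let `μ` be the probability measure on `O↗` with density proportional to
`exp((ε/4)·u_Q(X,o))` with respect to Lebesgue measure (the output distribution of `M_Q`).
Then for every `s ∈ S↗`,
`μ(g_O(s)) = exp((ε/4)·u_{Q'}(X,s)) · (∏_j (x_{i_j+1} − x_{i_j})) / γ(s) / Z_{Q'}`,
where `Z_{Q'} = ∑_{s' ∈ S↗} exp((ε/4)·u_{Q'}(X,s')) · (∏_j (x_{i'_j+1} − x_{i'_j})) / γ(s')`;
that is, `M_Q` and the two-stage mechanism `M_{Q'}` have the same output distribution. -/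
theorem MQ_eq_MQ' (a b : ℝ) (hab : a < b) (n m : ℕ) (hn : 1 ≤ n) (hm : 1 ≤ m)
    (q : ℕ → ℝ) (hq0 : q 0 = 0) (hqtop : q (m + 1) = 1)
    (hqmono : ∀ j ≤ m, q j < q (j + 1))
    (ε : ℝ) (hε : 0 < ε)
    (x : ℕ → ℝ) (hx0 : x 0 = a) (hxtop : x (n + 1) = b)
    (hxmono : ∀ i ≤ n, x i ≤ x (i + 1))
    (X : Multiset ℝ) (hX : X = (Multiset.range n).map (fun i => x (i + 1)))
    (μ : Measure (Fin m → ℝ))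
    (hμ : μ = (volume.restrict (Oup a b m)).withDensity (fun o =>
      ENNReal.ofReal (Real.exp ((ε / 4) * uQ a b m n q X o) /
        (∫ o' in Oup a b m, Real.exp ((ε / 4) * uQ a b m n q X o')))))
    (s : Fin m → Fin (n + 1)) (hs : Monotone s) :
    μ (cell a b n m x s)
      = ENNReal.ofReal ((Real.exp ((ε / 4) * uQ' n m q s) *
            (∏ j, (x ((s j : ℕ) + 1) - x (s j : ℕ))) / gammaFun n m s) /
          (∑ s' ∈ Finset.univ.filter (fun s' : Fin m → Fin (n + 1) => Monotone s'),
            Real.exp ((ε / 4) * uQ' n m q s') *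
              (∏ j, (x ((s' j : ℕ) + 1) - x (s' j : ℕ))) / gammaFun n m s')) := by
  subst hμ
  set E : (Fin m → ℝ) → ℝ := fun o => Real.exp ((ε / 4) * uQ a b m n q X o) with hE
  set Z : ℝ := ∫ o' in Oup a b m, E o' with hZdef
  set S : Finset (Fin m → Fin (n + 1)) :=
    Finset.univ.filter (fun s' : Fin m → Fin (n + 1) => Monotone s') with hSdef
  -- a.e. constancy on each cell
  have hae : ∀ s' : Fin m → Fin (n + 1), Monotone s' →
      ∀ᵐ o : Fin m → ℝ, o ∈ cell a b n m x s' →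
        E o = Real.exp ((ε / 4) * uQ' n m q s') := by
    intro s' hs'
    have hN : volume (⋃ j : Fin m, {o : Fin m → ℝ | o j = x (s' j : ℕ)}) = 0 :=
      measure_iUnion_null fun j => null_hyper m j _
    have hN' : ∀ᵐ o : Fin m → ℝ,
        o ∉ ⋃ j : Fin m, {o : Fin m → ℝ | o j = x (s' j : ℕ)} :=
      (MeasureTheory.compl_mem_ae_iff).2 hN
    filter_upwards [hN'] with o honN hocell
    have hstrict : ∀ j, x (s' j : ℕ) < o j ∧ o j < x ((s' j : ℕ) + 1) := by
      intro j
      refine ⟨lt_of_le_of_ne (hocell.2 j).1 ?_, (hocell.2 j).2⟩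
      intro h
      exact honN (Set.mem_iUnion.2 ⟨j, h.symm⟩)
    rw [hE]
    simp only
    rw [uQ_eq_uQ' hx0 hxtop hxmono q X hX s' hs' o hstrict]
  have hsub : ∀ s' : Fin m → Fin (n + 1),
      cell a b n m x s' ⊆ Oup a b m := fun s' o h => ⟨h.1.1, h.1.2⟩
  have hVnonneg : ∀ s' : Fin m → Fin (n + 1),
      0 ≤ (∏ j, (x ((s' j : ℕ) + 1) - x (s' j : ℕ))) / gammaFun n m s' := by
    intro s'
    apply div_nonneg
    · apply Finset.prod_nonneg
      intro j _
      have := hxmono (s' j : ℕ) (s' j).is_le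
      linarith
    · rw [gammaFun]
      exact le_of_lt (Finset.prod_pos fun i _ => by positivity)
  -- integrability and per-cell integral
  have hint : ∀ s' : Fin m → Fin (n + 1), Monotone s' →
      IntegrableOn E (cell a b n m x s') volume := by
    intro s' hs'
    have hfin : volume (cell a b n m x s') < ⊤ := by
      rw [vol_cell hx0 hxtop hxmono s' hs']
      exact ENNReal.ofReal_lt_top
    have hconst : IntegrableOn (fun _ : Fin m → ℝ =>
        Real.exp ((ε / 4) * uQ' n m q s')) (cell a b n m x s') volume :=
      integrableOn_const hfin.ne
    apply hconst.congr
    have h1 : ∀ᵐ o ∂(volume.restrict (cell a b n m x s')),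
        E o = Real.exp ((ε / 4) * uQ' n m q s') :=
      (MeasureTheory.ae_restrict_iff' (measurableSet_cell a b s')).2 (hae s' hs')
    exact h1.mono fun o h => h.symm
  have hcellint : ∀ s' : Fin m → Fin (n + 1), Monotone s' →
      ∫ o in cell a b n m x s', E o
        = Real.exp ((ε / 4) * uQ' n m q s') *
            ((∏ j, (x ((s' j : ℕ) + 1) - x (s' j : ℕ))) / gammaFun n m s') := by
    intro s' hs'
    rw [MeasureTheory.setIntegral_congr_ae (measurableSet_cell a b s') (hae s' hs')]
    rw [MeasureTheory.setIntegral_const, measureReal_def, vol_cell hx0 hxtop hxmono s' hs',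
      ENNReal.toReal_ofReal (hVnonneg s'), smul_eq_mul, mul_comm]
  -- the partition function
  have hZ : Z = ∑ s' ∈ S, Real.exp ((ε / 4) * uQ' n m q s') *
      ((∏ j, (x ((s' j : ℕ) + 1) - x (s' j : ℕ))) / gammaFun n m s') := by
    have hsets : Oup a b m =ᵐ[volume] ⋃ s' ∈ S, cell a b n m x s' := by
      rw [MeasureTheory.ae_eq_set]
      constructor
      · refine measure_mono_null (t := ⋃ j : Fin m, {o : Fin m → ℝ | o j = b}) ?_
          (measure_iUnion_null fun j => null_hyper m j _)
        rintro o ⟨ho, hnu⟩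
        simp only [Set.mem_iUnion, Set.mem_setOf_eq]
        by_contra hno
        push_neg at hno
        obtain ⟨s', hs', hocell⟩ := Oup_cover hx0 hxtop hxmono o ho hno
        exact hnu (Set.mem_biUnion (by rw [hSdef]; exact Finset.mem_filter.2 ⟨Finset.mem_univ _, hs'⟩) hocell)
      · have : (⋃ s' ∈ S, cell a b n m x s') \ Oup a b m = ∅ := by
          apply Set.diff_eq_empty.2
          intro o ho
          obtain ⟨s', _, hoc⟩ := Set.mem_iUnion₂.1 ho
          exact hsub s' hoc
        rw [this]
        exact measure_empty
    calc Z = ∫ o in ⋃ s' ∈ S, cell a b n m x s', E o :=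
          MeasureTheory.setIntegral_congr_set hsets
      _ = ∑ s' ∈ S, ∫ o in cell a b n m x s', E o := by
          apply MeasureTheory.integral_biUnion_finset S
            (fun s' _ => measurableSet_cell a b s')
          · intro s' hs' s'' hs'' hne
            exact cells_disjoint hxmono s' s'' hne
          · intro s' hs'
            exact hint s' (by simpa [hSdef] using hs')
      _ = ∑ s' ∈ S, Real.exp ((ε / 4) * uQ' n m q s') *
            ((∏ j, (x ((s' j : ℕ) + 1) - x (s' j : ℕ))) / gammaFun n m s') := by
          refine Finset.sum_congr rfl fun s' hs' => ?_
          exact hcellint s' (by simpa [hSdef] using hs')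
  have hZnonneg : 0 ≤ Z := by
    rw [hZdef]
    apply MeasureTheory.integral_nonneg
    intro o
    exact (Real.exp_pos _).le
  -- compute μ (cell s)
  rw [MeasureTheory.withDensity_apply _ (measurableSet_cell a b s)]
  rw [MeasureTheory.Measure.restrict_restrict (measurableSet_cell a b s),
    Set.inter_eq_left.2 (hsub s)]
  have haeZ : ∀ᵐ o : Fin m → ℝ, o ∈ cell a b n m x s →
      ENNReal.ofReal (E o / Z) = ENNReal.ofReal (Real.exp ((ε / 4) * uQ' n m q s) / Z) := by
    filter_upwards [hae s hs] with o h1 h2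
    rw [h1 h2]
  rw [MeasureTheory.setLIntegral_congr_fun_ae (measurableSet_cell a b s) haeZ]
  rw [MeasureTheory.setLIntegral_const, vol_cell hx0 hxtop hxmono s hs]
  rw [← ENNReal.ofReal_mul (div_nonneg (Real.exp_pos _).le hZnonneg)]
  congr 1
  have hgoalsum : (∑ s' ∈ S, Real.exp ((ε / 4) * uQ' n m q s') *
        (∏ j, (x ((s' j : ℕ) + 1) - x (s' j : ℕ))) / gammaFun n m s') = Z := by
    rw [hZ]
    exact Finset.sum_congr rfl fun s' _ => by rw [mul_div_assoc]
  rw [hgoalsum]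
  ring
end
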